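/- Let U ⊆ ℝ⁴ be open and let ρ : U → ℝ be a smooth positive harmonic function, i.e. Σ_{μ=0}^{3} ∂_μ²ρ = 0. Then Δ(Δ log ρ) = −2·Σ_{μ=0}^{3} Σ_{ν=0}^{3} [ (∂_μ∂_ν log ρ)² − 2·(∂_μ log ρ)(∂_ν log ρ)(∂_μ∂_ν log ρ) ], where Δ := Σ_{μ=0}^{3} ∂_μ². -/

import Mathlib

noncomputable section

/-- Partial derivative ∂_μ of a real-valued function on ℝ⁴, in the μ-th coordinate direction. -/
def pd (μ : Fin 4) (f : EuclideanSpace ℝ (Fin 4) → ℝ) (x : EuclideanSpace ℝ (Fin 4)) : ℝ :=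
  fderiv ℝ f x (EuclideanSpace.single μ 1)

/-- Flat Laplacian Δ = Σ_μ ∂_μ² on ℝ⁴. -/
def lap4 (f : EuclideanSpace ℝ (Fin 4) → ℝ) (x : EuclideanSpace ℝ (Fin 4)) : ℝ :=
  ∑ μ : Fin 4, pd μ (pd μ f) x

local notation "E4" => EuclideanSpace ℝ (Fin 4)

lemma pd_congr {U : Set E4} (hU : IsOpen U) {f g : E4 → ℝ} (h : Set.EqOn f g U)
    {x : E4} (hx : x ∈ U) (μ : Fin 4) : pd μ f x = pd μ g x := by
  unfold pd
  rw [Filter.EventuallyEq.fderiv_eq (Filter.eventuallyEq_of_mem (hU.mem_nhds hx) h)]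

lemma dAt {U : Set E4} (hU : IsOpen U) {f : E4 → ℝ} (hf : ContDiffOn ℝ (⊤ : ℕ∞) f U)
    {x : E4} (hx : x ∈ U) : DifferentiableAt ℝ f x :=
  (hf.contDiffAt (hU.mem_nhds hx)).differentiableAt (by simp)

lemma pd_smooth {U : Set E4} (hU : IsOpen U) {f : E4 → ℝ} (hf : ContDiffOn ℝ (⊤ : ℕ∞) f U)
    (μ : Fin 4) : ContDiffOn ℝ (⊤ : ℕ∞) (pd μ f) U :=
  (hf.fderiv_of_isOpen hU (by simp)).clm_apply contDiffOn_const

lemma pd_mul {f g : E4 → ℝ} {x : E4} (hf : DifferentiableAt ℝ f x)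
    (hg : DifferentiableAt ℝ g x) (μ : Fin 4) :
    pd μ (fun y => f y * g y) x = pd μ f x * g x + f x * pd μ g x := by
  unfold pd
  rw [fderiv_fun_mul hf hg]
  simp
  ring

lemma pd_sum {F : Fin 4 → E4 → ℝ} {x : E4} (h : ∀ ν, DifferentiableAt ℝ (F ν) x) (μ : Fin 4) :
    pd μ (fun y => ∑ ν : Fin 4, F ν y) x = ∑ ν : Fin 4, pd μ (F ν) x := by
  unfold pd
  rw [fderiv_fun_sum (fun i _ => h i)]
  simp

lemma pd_neg {f : E4 → ℝ} {x : E4} (μ : Fin 4) :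
    pd μ (fun y => -f y) x = -pd μ f x := by
  unfold pd; rw [fderiv_fun_neg]; simp

lemma pd_const_mul {f : E4 → ℝ} {x : E4} (hf : DifferentiableAt ℝ f x) (c : ℝ) (μ : Fin 4) :
    pd μ (fun y => c * f y) x = c * pd μ f x := by
  unfold pd; rw [fderiv_const_mul hf]; simp

lemma pd_inv {f : E4 → ℝ} {x : E4} (hf : DifferentiableAt ℝ f x) (h0 : f x ≠ 0) (μ : Fin 4) :
    pd μ (fun y => (f y)⁻¹) x = -pd μ f x / (f x)^2 := by
  unfold pd
  rw [show (fun y => (f y)⁻¹) = (fun y => y⁻¹) ∘ f from rfl,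
    ((hasDerivAt_inv h0).comp_hasFDerivAt x hf.hasFDerivAt).fderiv]
  simp
  ring

lemma pd_log {f : E4 → ℝ} {x : E4} (hf : DifferentiableAt ℝ f x) (h0 : f x ≠ 0) (μ : Fin 4) :
    pd μ (fun y => Real.log (f y)) x = pd μ f x / f x := by
  unfold pd
  rw [(hf.hasFDerivAt.log h0).fderiv]
  simp
  ring

lemma pd_comm {U : Set E4} (hU : IsOpen U) {f : E4 → ℝ} (hf : ContDiffOn ℝ (⊤ : ℕ∞) f U)
    {x : E4} (hx : x ∈ U) (μ ν : Fin 4) : pd μ (pd ν f) x = pd ν (pd μ f) x := by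
  have hf' : DifferentiableAt ℝ (fderiv ℝ f) x :=
    ((hf.fderiv_of_isOpen (m := (⊤ : ℕ∞)) hU (by simp)).contDiffAt (hU.mem_nhds hx)).differentiableAt (by simp)
  have hsymm : IsSymmSndFDerivAt ℝ f x :=
    (hf.contDiffAt (hU.mem_nhds hx)).isSymmSndFDerivAt (by rw [minSmoothness_of_isRCLikeNormedField]; exact WithTop.coe_le_coe.mpr (le_top : (2 : ℕ∞) ≤ ⊤))
  have key : ∀ a b : Fin 4, pd a (pd b f) x =
      fderiv ℝ (fderiv ℝ f) x (EuclideanSpace.single a 1) (EuclideanSpace.single b 1) := by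
    intro a b
    show fderiv ℝ (fun y => fderiv ℝ f y (EuclideanSpace.single b 1)) x _ = _
    rw [fderiv_clm_apply hf' (differentiableAt_const _)]
    simp
  rw [key, key, hsymm]


/-- For a smooth positive harmonic function ρ on an open U ⊆ ℝ⁴,
Δ(Δ log ρ) = −2·Σ_{μ,ν} [ (∂_μ∂_ν log ρ)² − 2·(∂_μ log ρ)(∂_ν log ρ)(∂_μ∂_ν log ρ) ]. -/
theorem bilaplacian_log (U : Set (EuclideanSpace ℝ (Fin 4))) (hU : IsOpen U)
    (ρ : EuclideanSpace ℝ (Fin 4) → ℝ) (hρ : ContDiffOn ℝ (⊤ : ℕ∞) ρ U)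
    (hpos : ∀ x ∈ U, 0 < ρ x) (hharm : ∀ x ∈ U, lap4 ρ x = 0) :
    ∀ p ∈ U,
      lap4 (lap4 (fun x => Real.log (ρ x))) p =
      -2 * ∑ μ : Fin 4, ∑ ν : Fin 4,
        ((pd μ (pd ν (fun x => Real.log (ρ x))) p)^2 -
          2 * pd μ (fun x => Real.log (ρ x)) p * pd ν (fun x => Real.log (ρ x)) p *
            pd μ (pd ν (fun x => Real.log (ρ x))) p) := by
  intro p hp
  set u : EuclideanSpace ℝ (Fin 4) → ℝ := fun x => Real.log (ρ x) with hu_def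
  have hρ0 : ∀ x ∈ U, ρ x ≠ 0 := fun x hx => (hpos x hx).ne'
  have hu : ContDiffOn ℝ (⊤ : ℕ∞) u U := by rw [hu_def]; exact hρ.log hρ0
  have hupd : ∀ ν, ContDiffOn ℝ (⊤ : ℕ∞) (pd ν u) U := fun ν => pd_smooth hU hu ν
  have hupd2 : ∀ μ ν, ContDiffOn ℝ (⊤ : ℕ∞) (pd μ (pd ν u)) U := fun μ ν => pd_smooth hU (hupd ν) μ
  -- first derivatives of u
  have heq1 : ∀ ν : Fin 4, Set.EqOn (pd ν u) (fun y => pd ν ρ y * (ρ y)⁻¹) U := by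
    intro ν x hx
    rw [hu_def, pd_log (dAt hU hρ hx) (hρ0 x hx), div_eq_mul_inv]
  -- the function g = -|∇u|²
  set g : EuclideanSpace ℝ (Fin 4) → ℝ := fun y => -∑ ν : Fin 4, (pd ν u y)^2 with hg_def
  -- Laplacian of u equals g on U
  have hlapu : Set.EqOn (lap4 u) g U := by
    intro x hx
    have hterm : ∀ μ : Fin 4, pd μ (pd μ u) x
        = pd μ (pd μ ρ) x * (ρ x)⁻¹ + pd μ ρ x * (-pd μ ρ x / (ρ x)^2) := by
      intro μ
      rw [pd_congr hU (heq1 μ) hx μ,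
        pd_mul (g := fun y => (ρ y)⁻¹) (dAt hU (pd_smooth hU hρ μ) hx) ((dAt hU hρ hx).inv (hρ0 x hx)) μ,
        pd_inv (dAt hU hρ hx) (hρ0 x hx) μ]
    have hμu : ∀ μ : Fin 4, pd μ u x = pd μ ρ x * (ρ x)⁻¹ := fun μ => heq1 μ hx
    have hharm' : ∑ μ : Fin 4, pd μ (pd μ ρ) x = 0 := hharm x hx
    show (∑ μ : Fin 4, pd μ (pd μ u) x) = g x
    rw [hg_def]
    calc ∑ μ : Fin 4, pd μ (pd μ u) x
        = ∑ μ : Fin 4, (pd μ (pd μ ρ) x * (ρ x)⁻¹ + pd μ ρ x * (-pd μ ρ x / (ρ x)^2)) :=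
          Finset.sum_congr rfl (fun μ _ => hterm μ)
      _ = (∑ μ : Fin 4, pd μ (pd μ ρ) x) * (ρ x)⁻¹
            + ∑ μ : Fin 4, pd μ ρ x * (-pd μ ρ x / (ρ x)^2) := by
          rw [Finset.sum_add_distrib, Finset.sum_mul]
      _ = ∑ μ : Fin 4, -((pd μ u x)^2) := by
          rw [hharm', zero_mul, zero_add]
          refine Finset.sum_congr rfl (fun μ _ => ?_)
          rw [hμu μ]
          have h0 : ρ x ≠ 0 := hρ0 x hx
          field_simp
      _ = -∑ ν : Fin 4, (pd ν u x)^2 := by rw [← Finset.sum_neg_distrib]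
  -- derivatives of g
  have hpdg : ∀ x ∈ U, ∀ μ : Fin 4, pd μ g x = -2 * ∑ ν : Fin 4, pd ν u x * pd μ (pd ν u) x := by
    intro x hx μ
    have hdiffsq : ∀ ν : Fin 4, DifferentiableAt ℝ (fun y => (pd ν u y)^2) x :=
      fun ν => (dAt hU (hupd ν) hx).pow 2
    have e1 : pd μ g x = -∑ ν : Fin 4, pd μ (fun y => (pd ν u y)^2) x := by
      rw [hg_def, pd_neg, pd_sum hdiffsq]
    rw [e1]
    have e2 : ∀ ν : Fin 4, pd μ (fun y => (pd ν u y)^2) x = 2 * (pd ν u x * pd μ (pd ν u) x) := by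
      intro ν
      have hsq : (fun y => (pd ν u y)^2) = fun y => pd ν u y * pd ν u y := by
        funext y; ring
      rw [hsq, pd_mul (dAt hU (hupd ν) hx) (dAt hU (hupd ν) hx) μ]; ring
    rw [Finset.sum_congr rfl (fun ν _ => e2 ν), ← Finset.mul_sum]
    ring
  -- sum of third derivatives via symmetry
  have hAsum : ∀ ν : Fin 4, ∑ μ : Fin 4, pd μ (pd μ (pd ν u)) p
      = -2 * ∑ η : Fin 4, pd η u p * pd ν (pd η u) p := by
    intro ν
    have step1 : ∀ μ : Fin 4, pd μ (pd μ (pd ν u)) p = pd ν (pd μ (pd μ u)) p := by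
      intro μ
      have eOn : Set.EqOn (pd μ (pd ν u)) (pd ν (pd μ u)) U :=
        fun y hy => pd_comm hU hu hy μ ν
      rw [pd_congr hU eOn hp μ, pd_comm hU (hupd μ) hp μ ν]
    calc ∑ μ : Fin 4, pd μ (pd μ (pd ν u)) p
        = ∑ μ : Fin 4, pd ν (pd μ (pd μ u)) p :=
          Finset.sum_congr rfl fun μ _ => step1 μ
      _ = pd ν (fun y => ∑ μ : Fin 4, pd μ (pd μ u) y) p :=
          (pd_sum (fun μ => dAt hU (hupd2 μ μ) hp) ν).symm
      _ = pd ν (lap4 u) p := rfl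
      _ = pd ν g p := pd_congr hU hlapu hp ν
      _ = -2 * ∑ η : Fin 4, pd η u p * pd ν (pd η u) p := hpdg p hp ν
  -- outer second derivative
  have hout : ∀ μ : Fin 4, pd μ (pd μ (lap4 u)) p
      = -2 * ∑ ν : Fin 4,
          (pd μ (pd ν u) p * pd μ (pd ν u) p + pd ν u p * pd μ (pd μ (pd ν u)) p) := by
    intro μ
    have e0 : Set.EqOn (pd μ (lap4 u)) (pd μ g) U := fun y hy => pd_congr hU hlapu hy μ
    have e1 : Set.EqOn (pd μ g)
        (fun y => -2 * ∑ ν : Fin 4, pd ν u y * pd μ (pd ν u) y) U :=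
      fun y hy => hpdg y hy μ
    rw [pd_congr hU e0 hp μ, pd_congr hU e1 hp μ]
    have hdiffprod : ∀ ν : Fin 4,
        DifferentiableAt ℝ (fun y => pd ν u y * pd μ (pd ν u) y) p :=
      fun ν => (dAt hU (hupd ν) hp).mul (dAt hU (hupd2 μ ν) hp)
    rw [pd_const_mul (DifferentiableAt.fun_sum (fun ν _ => hdiffprod ν)) (-2) μ,
      pd_sum hdiffprod μ]
    congr 1
    refine Finset.sum_congr rfl (fun ν _ => ?_)
    rw [pd_mul (dAt hU (hupd ν) hp) (dAt hU (hupd2 μ ν) hp) μ]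
  -- final assembly
  have hmain : lap4 (lap4 u) p = ∑ μ : Fin 4, (-2 * ∑ ν : Fin 4,
      (pd μ (pd ν u) p * pd μ (pd ν u) p + pd ν u p * pd μ (pd μ (pd ν u)) p)) :=
    Finset.sum_congr rfl fun μ _ => hout μ
  rw [hmain]
  have h0 := hAsum 0
  have h1 := hAsum 1
  have h2 := hAsum 2
  have h3 := hAsum 3
  simp only [Fin.sum_univ_four] at h0 h1 h2 h3 ⊢
  linear_combination (-2 * pd 0 u p) * h0 + (-2 * pd 1 u p) * h1 +
    (-2 * pd 2 u p) * h2 + (-2 * pd 3 u p) * h3
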